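/- arXiv:1310.2439 — 4 statements merged into one kernel-verified Lean document; each statement's English description precedes it below -/
import Mathlib

section
/- Let V be a finite-dimensional real inner product space, L₁, L₂ : V → V positive semi-definite self-adjoint linear operators, f₁, f₂ > 0 real numbers, and E₀ ∈ V. Let π be the orthogonal projection onto Range L₁ ∩ Range L₂. Then the minimum of f₁⟨E₁, L₁E₁⟩ + f₂⟨E₂, L₂E₂⟩ over all E₁, E₂ ∈ V with f₁E₁ + f₂E₂ = E₀ equals ⟨πE₀, [π(f₁L₁⁻¹ + f₂L₂⁻¹)π]⁻¹ πE₀⟩, where all inverses are Moore–Penrose pseudo-inverses. -/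
/-!
Completing the square, `⟪E, L E⟫ ≥ 2 ⟪L b, E⟫ - ⟪b, L b⟫` for positive symmetric `L`, so any
Lagrange multiplier `a` with `L₁ b₁ = L₂ b₂ = a` and `E₀ - (f₁ b₁ + f₂ b₂) ∈ ker L₁ ⊔ ker L₂`
bounds the energy below by `⟪a, E₀⟫`; moving `b₁, b₂` along the kernels attains the bound.
The multiplier is `a = π N π E₀`: the compression `π (f₁ M₁ + f₂ M₂) π` is definite on
`W = range L₁ ⊓ range L₂`, so it maps `W` onto itself and `N` inverts it there, while
`Wᗮ = ker L₁ ⊔ ker L₂`.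
-/

open scoped RealInnerProductSpace

/-- The Moore–Penrose pseudo-inverse conditions for linear operators on a real inner
product space: `LML = L`, `MLM = M`, and both `LM` and `ML` are self-adjoint. -/
def IsMoorePenroseInv {V : Type*} [NormedAddCommGroup V] [InnerProductSpace ℝ V]
    (L M : V →ₗ[ℝ] V) : Prop :=
  L ∘ₗ M ∘ₗ L = L ∧ M ∘ₗ L ∘ₗ M = M ∧
    (L ∘ₗ M).IsSymmetric ∧ (M ∘ₗ L).IsSymmetric

namespace LinearMap.IsSymmetric

variable {V : Type*} [NormedAddCommGroup V] [InnerProductSpace ℝ V] {L : V →ₗ[ℝ] V}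

theorem two_mul_inner_apply_sub_le (hL : L.IsSymmetric) (hpos : ∀ x, 0 ≤ ⟪x, L x⟫) (b E : V) :
    2 * ⟪L b, E⟫ - ⟪b, L b⟫ ≤ ⟪E, L E⟫ := by
  have h := hpos (E - b)
  rw [map_sub, inner_sub_left, inner_sub_right, inner_sub_right, ← hL b E] at h
  linarith [real_inner_comm E (L b)]

theorem inner_add_apply_add_of_mem_ker (hL : L.IsSymmetric) (b : V) {k : V} (hk : k ∈ ker L) :
    ⟪b + k, L (b + k)⟫ = ⟪b, L b⟫ := by
  rw [mem_ker] at hk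
  rw [map_add, hk, add_zero, inner_add_left, real_inner_comm, ← hL, hk, inner_zero_left,
    add_zero]

theorem apply_eq_zero_of_inner_apply_eq_zero (hL : L.IsSymmetric) (hpos : ∀ x, 0 ≤ ⟪x, L x⟫)
    {x : V} (hx : ⟪x, L x⟫ = 0) : L x = 0 := by
  have hquad : ∀ t : ℝ, 0 ≤ ⟪L x, L (L x)⟫ * (t * t) + 2 * ⟪L x, L x⟫ * t + 0 := by
    intro t
    have h := hL.two_mul_inner_apply_sub_le hpos x (-t • L x)
    simp only [map_smul, real_inner_smul_left, real_inner_smul_right, hx] at h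
    linarith
  have hdisc : (2 * ⟪L x, L x⟫) ^ 2 = 0 :=
    le_antisymm (by simpa [discrim] using discrim_le_zero hquad) (sq_nonneg _)
  simpa using hdisc

theorem orthogonal_inf_range [FiniteDimensional ℝ V] {L₁ L₂ : V →ₗ[ℝ] V}
    (hL₁ : L₁.IsSymmetric) (hL₂ : L₂.IsSymmetric) :
    (range L₁ ⊓ range L₂)ᗮ = ker L₁ ⊔ ker L₂ := by
  rw [← hL₁.orthogonal_range, ← hL₂.orthogonal_range,
    ← Submodule.orthogonal_orthogonal ((range L₁)ᗮ ⊔ (range L₂)ᗮ), ← Submodule.inf_orthogonal,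
    Submodule.orthogonal_orthogonal, Submodule.orthogonal_orthogonal]

end LinearMap.IsSymmetric

namespace IsMoorePenroseInv

variable {V : Type*} [NormedAddCommGroup V] [InnerProductSpace ℝ V] {L M : V →ₗ[ℝ] V}

theorem apply_apply_of_mem_range (h : IsMoorePenroseInv L M) {a : V}
    (ha : a ∈ LinearMap.range L) : L (M a) = a := by
  obtain ⟨y, rfl⟩ := ha
  exact LinearMap.congr_fun h.1 y

theorem inner_apply_apply (h : IsMoorePenroseInv L M) (hL : L.IsSymmetric) (y : V) :
    ⟪L y, M (L y)⟫ = ⟪y, L y⟫ := by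
  rw [hL, h.apply_apply_of_mem_range ⟨y, rfl⟩]

end IsMoorePenroseInv

section

variable {V : Type*} [NormedAddCommGroup V] [InnerProductSpace ℝ V]

open LinearMap

theorem eq_zero_of_inner_smul_add_smul_apply_eq_zero {L₁ L₂ M₁ M₂ : V →ₗ[ℝ] V}
    (hL₁ : L₁.IsSymmetric) (hL₂ : L₂.IsSymmetric)
    (hL₁pos : ∀ x, 0 ≤ ⟪x, L₁ x⟫) (hL₂pos : ∀ x, 0 ≤ ⟪x, L₂ x⟫)
    (hM₁ : IsMoorePenroseInv L₁ M₁) (hM₂ : IsMoorePenroseInv L₂ M₂) {f₁ f₂ : ℝ}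
    (hf₁ : 0 < f₁) (hf₂ : 0 ≤ f₂) {w : V} (hw : w ∈ range L₁ ⊓ range L₂)
    (h0 : ⟪w, (f₁ • M₁ + f₂ • M₂) w⟫ = 0) : w = 0 := by
  obtain ⟨⟨y₁, rfl⟩, ⟨y₂, hy₂⟩⟩ := hw
  have h₂ : ⟪L₁ y₁, M₂ (L₁ y₁)⟫ = ⟪y₂, L₂ y₂⟫ := by rw [← hy₂, hM₂.inner_apply_apply hL₂]
  rw [LinearMap.add_apply, LinearMap.smul_apply, LinearMap.smul_apply, inner_add_right,
    real_inner_smul_right, real_inner_smul_right, hM₁.inner_apply_apply hL₁, h₂] at h0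
  have hy₁ : ⟪y₁, L₁ y₁⟫ = 0 := by
    nlinarith [hL₁pos y₁, mul_nonneg hf₂ (hL₂pos y₂)]
  exact hL₁.apply_eq_zero_of_inner_apply_eq_zero hL₁pos hy₁

theorem Submodule.le_range_starProjection_comp_comp [FiniteDimensional ℝ V]
    (W : Submodule ℝ V) {G : V →ₗ[ℝ] V} (hG : ∀ w ∈ W, ⟪w, G w⟫ = 0 → w = 0) :
    W ≤ range (W.starProjection.toLinearMap ∘ₗ G ∘ₗ W.starProjection.toLinearMap) := by
  set P : V →ₗ[ℝ] V := W.starProjection.toLinearMap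
  have hP : ∀ w ∈ W, P w = w := fun w hw ↦ W.starProjection_eq_self_iff.mpr hw
  let T : W →ₗ[ℝ] W := (P ∘ₗ G).restrict fun v _ ↦ W.starProjection_apply_mem (G v)
  have hT : Function.Injective T := by
    rw [← ker_eq_bot, ker_eq_bot']
    intro w hw
    have hPGw : P (G w) = 0 := congrArg Subtype.val hw
    refine Subtype.ext (hG w w.2 ?_)
    calc ⟪(w : V), G w⟫ = ⟪P w, G w⟫ := by rw [hP w w.2]
      _ = ⟪(w : V), P (G w)⟫ := W.inner_starProjection_left_eq_right _ _
      _ = 0 := by rw [hPGw, inner_zero_right]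
  intro u hu
  obtain ⟨w, hw⟩ := injective_iff_surjective.mp hT ⟨u, hu⟩
  refine ⟨w, ?_⟩
  rw [comp_apply, comp_apply, hP w w.2]
  exact congrArg Subtype.val hw

theorem isLeast_of_lagrange_multiplier {L₁ L₂ : V →ₗ[ℝ] V} (hL₁ : L₁.IsSymmetric) (hL₂ : L₂.IsSymmetric)
    (hL₁pos : ∀ x, 0 ≤ ⟪x, L₁ x⟫) (hL₂pos : ∀ x, 0 ≤ ⟪x, L₂ x⟫) {f₁ f₂ : ℝ}
    (hf₁ : 0 < f₁) (hf₂ : 0 < f₂) {a b₁ b₂ E₀ : V} (hb₁ : L₁ b₁ = a) (hb₂ : L₂ b₂ = a)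
    (hE₀ : E₀ - (f₁ • b₁ + f₂ • b₂) ∈ ker L₁ ⊔ ker L₂) :
    IsLeast {r : ℝ | ∃ E₁ E₂ : V, f₁ • E₁ + f₂ • E₂ = E₀ ∧
        r = f₁ * ⟪E₁, L₁ E₁⟫ + f₂ * ⟪E₂, L₂ E₂⟫} ⟪a, E₀⟫ := by
  obtain ⟨k₁, hk₁, k₂, hk₂, hk⟩ := Submodule.mem_sup.mp hE₀
  have hak₁ : ⟪a, k₁⟫ = 0 := by rw [← hb₁, hL₁, mem_ker.mp hk₁, inner_zero_right]
  have hak₂ : ⟪a, k₂⟫ = 0 := by rw [← hb₂, hL₂, mem_ker.mp hk₂, inner_zero_right]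
  have hvalue : f₁ * ⟪b₁, a⟫ + f₂ * ⟪b₂, a⟫ = ⟪a, E₀⟫ := by
    rw [← sub_add_cancel E₀ (f₁ • b₁ + f₂ • b₂), ← hk]
    simp only [inner_add_right, real_inner_smul_right, hak₁, hak₂, real_inner_comm a]
    ring
  constructor
  · refine ⟨b₁ + f₁⁻¹ • k₁, b₂ + f₂⁻¹ • k₂, ?_, ?_⟩
    · rw [smul_add, smul_add, smul_inv_smul₀ hf₁.ne', smul_inv_smul₀ hf₂.ne', add_add_add_comm,
        hk, add_sub_cancel]
    · rw [hL₁.inner_add_apply_add_of_mem_ker b₁ (Submodule.smul_mem _ _ hk₁),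
        hL₂.inner_add_apply_add_of_mem_ker b₂ (Submodule.smul_mem _ _ hk₂), hb₁, hb₂, hvalue]
  · rintro r ⟨E₁, E₂, hE, rfl⟩
    have h₁ := hL₁.two_mul_inner_apply_sub_le hL₁pos b₁ E₁
    have h₂ := hL₂.two_mul_inner_apply_sub_le hL₂pos b₂ E₂
    rw [hb₁] at h₁
    rw [hb₂] at h₂
    have hsplit : f₁ * ⟪a, E₁⟫ + f₂ * ⟪a, E₂⟫ = ⟪a, E₀⟫ := by
      rw [← hE, inner_add_right, real_inner_smul_right, real_inner_smul_right]
    linarith [mul_le_mul_of_nonneg_left h₁ hf₁.le, mul_le_mul_of_nonneg_left h₂ hf₂.le]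

end

/-- The minimum of `f₁⟨E₁, L₁E₁⟩ + f₂⟨E₂, L₂E₂⟩` over `f₁E₁ + f₂E₂ = E₀` equals
`⟨πE₀, [π(f₁L₁⁻¹ + f₂L₂⁻¹)π]⁻¹ πE₀⟩`, where `π` is the orthogonal projection onto
`Range L₁ ∩ Range L₂` and the inverses are Moore–Penrose pseudo-inverses. -/
theorem stmt_0 {V : Type*} [NormedAddCommGroup V] [InnerProductSpace ℝ V]
    [FiniteDimensional ℝ V]
    (L₁ L₂ : V →ₗ[ℝ] V) (hL₁ : L₁.IsSymmetric) (hL₂ : L₂.IsSymmetric)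
    (hL₁pos : ∀ x : V, 0 ≤ ⟪x, L₁ x⟫) (hL₂pos : ∀ x : V, 0 ≤ ⟪x, L₂ x⟫)
    (f₁ f₂ : ℝ) (hf₁ : 0 < f₁) (hf₂ : 0 < f₂) (E₀ : V)
    (M₁ M₂ : V →ₗ[ℝ] V) (hM₁ : IsMoorePenroseInv L₁ M₁) (hM₂ : IsMoorePenroseInv L₂ M₂)
    (π : V →ₗ[ℝ] V)
    (hπ : π = (LinearMap.range L₁ ⊓ LinearMap.range L₂).subtype ∘ₗ
        (Submodule.orthogonalProjection (LinearMap.range L₁ ⊓ LinearMap.range L₂)).toLinearMap)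
    (N : V →ₗ[ℝ] V)
    (hN : IsMoorePenroseInv (π ∘ₗ (f₁ • M₁ + f₂ • M₂) ∘ₗ π) N) :
    IsLeast {r : ℝ | ∃ E₁ E₂ : V, f₁ • E₁ + f₂ • E₂ = E₀ ∧
        r = f₁ * ⟪E₁, L₁ E₁⟫ + f₂ * ⟪E₂, L₂ E₂⟫}
      ⟪π E₀, N (π E₀)⟫ := by
  set W := LinearMap.range L₁ ⊓ LinearMap.range L₂
  have hπW : π = W.starProjection.toLinearMap := hπ
  have hπmem : ∀ x, π x ∈ W := fun x ↦ hπW ▸ W.starProjection_apply_mem x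
  have hπsym : π.IsSymmetric := hπW ▸ W.starProjection_isSymmetric
  have hWB : W ≤ LinearMap.range (π ∘ₗ (f₁ • M₁ + f₂ • M₂) ∘ₗ π) :=
    hπW ▸ W.le_range_starProjection_comp_comp fun w hw ↦
      eq_zero_of_inner_smul_add_smul_apply_eq_zero hL₁ hL₂ hL₁pos hL₂pos hM₁ hM₂ hf₁ hf₂.le hw
  obtain ⟨v, hv⟩ := hWB (hπmem E₀)
  have hGa : π (f₁ • M₁ (π (N (π E₀))) + f₂ • M₂ (π (N (π E₀)))) = π E₀ := by
    -- `π E₀ = B v` for the compression `B = π (f₁ M₁ + f₂ M₂) π`, and `B N B = B`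
    rw [← hv]
    exact LinearMap.congr_fun hN.1 v
  set a := π (N (π E₀))
  have hE₀ker : E₀ - (f₁ • M₁ a + f₂ • M₂ a) ∈ LinearMap.ker L₁ ⊔ LinearMap.ker L₂ := by
    have hπ0 : π (E₀ - (f₁ • M₁ a + f₂ • M₂ a)) = 0 := by rw [map_sub, hGa, sub_self]
    rw [← hL₁.orthogonal_inf_range hL₂, ← W.starProjection_apply_eq_zero_iff]
    rwa [hπW] at hπ0
  have hval : ⟪a, E₀⟫ = ⟪π E₀, N (π E₀)⟫ := by
    rw [hπsym, real_inner_comm]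
  exact hval ▸ isLeast_of_lagrange_multiplier hL₁ hL₂ hL₁pos hL₂pos hf₁ hf₂
    (hM₁.apply_apply_of_mem_range (hπmem _).1) (hM₂.apply_apply_of_mem_range (hπmem _).2) hE₀ker
end

section
/- Let σ' > 0, σ'' ∈ ℝ, and real parameters t₁, t₂, t₃. Define D_{t₃} = [[1/σ', σ''/σ' + t₃],[σ''/σ' + t₃, (σ'²+σ''²)/σ']] and T = diag(t₁, t₂). Let D̃ be the 4×4 matrix [[(1/σ')I₂, (σ''/σ' + t₃)I₂],[(σ''/σ' + t₃)I₂, ((σ'²+σ''²)/σ')I₂]], let R⊥ = [[0,1],[−1,0]] and R = [[t₁R⊥, 0],[0, t₂R⊥]]. Then the block matrix L = [[D̃, R],[−R, D̃]] is positive semi-definite if and only if both D_{t₃} + T and D_{t₃} − T are positive semi-definite. -/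
open Matrix

/-- The 8×8 translated matrix `L = [[D̃, R],[−R, D̃]]` is positive semi-definite iff
`D_{t₃} + T` and `D_{t₃} − T` are both positive semi-definite. -/
theorem stmt_3 (σ' σ'' t₁ t₂ t₃ : ℝ) (hσ : 0 < σ') :
    let D : Matrix (Fin 2) (Fin 2) ℝ :=
      !![1 / σ', σ'' / σ' + t₃; σ'' / σ' + t₃, (σ' ^ 2 + σ'' ^ 2) / σ']
    let T : Matrix (Fin 2) (Fin 2) ℝ := !![t₁, 0; 0, t₂]
    let Rperp : Matrix (Fin 2) (Fin 2) ℝ := !![0, 1; -1, 0]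
    let Dtilde : Matrix (Fin 2 ⊕ Fin 2) (Fin 2 ⊕ Fin 2) ℝ :=
      fromBlocks ((1 / σ') • (1 : Matrix (Fin 2) (Fin 2) ℝ))
        ((σ'' / σ' + t₃) • (1 : Matrix (Fin 2) (Fin 2) ℝ))
        ((σ'' / σ' + t₃) • (1 : Matrix (Fin 2) (Fin 2) ℝ))
        (((σ' ^ 2 + σ'' ^ 2) / σ') • (1 : Matrix (Fin 2) (Fin 2) ℝ))
    let R : Matrix (Fin 2 ⊕ Fin 2) (Fin 2 ⊕ Fin 2) ℝ :=
      fromBlocks (t₁ • Rperp) 0 0 (t₂ • Rperp)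
    (fromBlocks Dtilde R (-R) Dtilde).PosSemidef ↔
      (D + T).PosSemidef ∧ (D - T).PosSemidef := by
  intro D T Rperp Dtilde R
  have hD : D = !![1 / σ', σ'' / σ' + t₃; σ'' / σ' + t₃, (σ' ^ 2 + σ'' ^ 2) / σ'] := rfl
  have hT : T = !![t₁, 0; 0, t₂] := rfl
  have hRp : Rperp = !![0, 1; -1, 0] := rfl
  have hDt : Dtilde = fromBlocks ((1 / σ') • (1 : Matrix (Fin 2) (Fin 2) ℝ))
        ((σ'' / σ' + t₃) • (1 : Matrix (Fin 2) (Fin 2) ℝ))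
        ((σ'' / σ' + t₃) • (1 : Matrix (Fin 2) (Fin 2) ℝ))
        (((σ' ^ 2 + σ'' ^ 2) / σ') • (1 : Matrix (Fin 2) (Fin 2) ℝ)) := rfl
  have hR : R = fromBlocks (t₁ • Rperp) 0 0 (t₂ • Rperp) := rfl
  constructor
  · intro hL
    refine ⟨.of_dotProduct_mulVec_nonneg ?_ ?_, .of_dotProduct_mulVec_nonneg ?_ ?_⟩
    · rw [hD, hT]; ext i j; fin_cases i <;> fin_cases j <;>
        simp [Matrix.conjTranspose_apply]
    · intro y
      have h := hL.dotProduct_mulVec_nonneg (Sum.elim (Sum.elim ![y 0, 0] ![y 1, 0]) (Sum.elim ![0, y 0] ![0, y 1]))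
      have hstar : ∀ v : (Fin 2 ⊕ Fin 2) ⊕ (Fin 2 ⊕ Fin 2) → ℝ, star v = v := fun _ => rfl
      have hstar2 : star y = y := rfl
      rw [hstar] at h
      rw [hstar2]
      simp [hD, hT, hRp, hDt, hR, dotProduct, Matrix.mulVec, Fintype.sum_sum_type,
        Fin.sum_univ_two, Matrix.one_apply] at h ⊢
      linarith [h]
    · rw [hD, hT]; ext i j; fin_cases i <;> fin_cases j <;>
        simp [Matrix.conjTranspose_apply]
    · intro y
      have h := hL.dotProduct_mulVec_nonneg (Sum.elim (Sum.elim ![y 0, 0] ![y 1, 0]) (Sum.elim ![0, -y 0] ![0, -y 1]))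
      have hstar : ∀ v : (Fin 2 ⊕ Fin 2) ⊕ (Fin 2 ⊕ Fin 2) → ℝ, star v = v := fun _ => rfl
      have hstar2 : star y = y := rfl
      rw [hstar] at h
      rw [hstar2]
      simp [hD, hT, hRp, hDt, hR, dotProduct, Matrix.mulVec, Fintype.sum_sum_type,
        Fin.sum_univ_two, Matrix.one_apply] at h ⊢
      linarith [h]
  · rintro ⟨h1, h2⟩
    have hRperpT : Rperpᵀ = -Rperp := by
      rw [hRp]; ext i j; fin_cases i <;> fin_cases j <;> simp
    have hRT : Rᴴ = -R := by
      rw [hR, Matrix.fromBlocks_conjTranspose]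
      rw [Matrix.fromBlocks_neg]
      congr 1 <;> simp [Matrix.conjTranspose_smul, hRperpT]
    have hDtT : Dtildeᴴ = Dtilde := by
      rw [hDt, Matrix.fromBlocks_conjTranspose]
      congr 1 <;> simp [Matrix.conjTranspose_smul]
    refine .of_dotProduct_mulVec_nonneg ?_ ?_
    · show (fromBlocks Dtilde R (-R) Dtilde)ᴴ = _
      rw [Matrix.fromBlocks_conjTranspose, hDtT, Matrix.conjTranspose_neg, hRT, neg_neg]
    · intro x
      have hstar : star x = x := rfl
      rw [hstar]
      have q1 := h1.dotProduct_mulVec_nonneg ![x (Sum.inl (Sum.inl 0)) + x (Sum.inr (Sum.inl 1)),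
                       x (Sum.inl (Sum.inr 0)) + x (Sum.inr (Sum.inr 1))]
      have q2 := h2.dotProduct_mulVec_nonneg ![x (Sum.inl (Sum.inl 0)) - x (Sum.inr (Sum.inl 1)),
                       x (Sum.inl (Sum.inr 0)) - x (Sum.inr (Sum.inr 1))]
      have q3 := h1.dotProduct_mulVec_nonneg ![x (Sum.inl (Sum.inl 1)) - x (Sum.inr (Sum.inl 0)),
                       x (Sum.inl (Sum.inr 1)) - x (Sum.inr (Sum.inr 0))]
      have q4 := h2.dotProduct_mulVec_nonneg ![x (Sum.inl (Sum.inl 1)) + x (Sum.inr (Sum.inl 0)),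
                       x (Sum.inl (Sum.inr 1)) + x (Sum.inr (Sum.inr 0))]
      simp [hD, hT, hRp, hDt, hR, dotProduct, Matrix.mulVec, Fintype.sum_sum_type,
        Fin.sum_univ_two, Matrix.one_apply] at q1 q2 q3 q4 ⊢
      linarith [q1, q2, q3, q4]
end

section
/- Let σ₂ = σ₂' + iσ₂'' with σ₂' > 0, and let t₁, t₂, t₃ ∈ ℝ satisfy t₂ = −|σ₂|²t₁ and t₃ = rσ₂'t₁ for some r ∈ ℝ with 1/t₁ = rσ₂'' ± √((r²+1)|σ₂|²) (t₁ ≠ 0). Then det(D_{t₃}(σ₂) + T) = 0 and det(D_{t₃}(σ₂) − T) = 0, where D_{t₃}(σ₂) = [[1/σ₂', σ₂''/σ₂'+t₃],[σ₂''/σ₂'+t₃, |σ₂|²/σ₂']] and T = diag(t₁, t₂). -/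
/-!
Both determinants reduce to the same expression: with `a = σ₂'`, `b = σ₂''` and `n = |σ₂|² = a² + b²`,
`det(D_{t₃}(σ₂) ± T) = 1 - 2bt₃/a - t₃² - n t₁²`, because the diagonal of `D ± T` multiplies to
`n (1/a² - t₁²)` for either sign. Substituting `t₃ = r a t₁` gives `t₁² (s² - 2rbs - (r²a² + n))` with
`s = 1/t₁`, and the prescribed values of `s` are exactly the two roots of this quadratic, whose
discriminant is `4 (r² + 1) n`.
-/

theorem sq_sub_two_mul_sub_eq_zero_of_eq_add_or_sub_sqrt {p c x : ℝ} (h : 0 ≤ p ^ 2 + c)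
    (hx : x = p + √(p ^ 2 + c) ∨ x = p - √(p ^ 2 + c)) :
    x ^ 2 - 2 * p * x - c = 0 := by
  have hsq : (x - p) ^ 2 = p ^ 2 + c := by
    rcases hx with rfl | rfl <;> simp [Real.sq_sqrt h]
  linear_combination hsq

theorem det_fin_two_add_smul_diagonal {a b c n t ε : ℝ} (ha : a ≠ 0) (hn : n = a ^ 2 + b ^ 2)
    (hε : ε ^ 2 = 1) :
    (!![1 / a, b / a + c; b / a + c, n / a] + ε • !![t, 0; 0, -n * t]).det =
      1 - 2 * b * c / a - c ^ 2 - n * t ^ 2 := by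
  subst hn
  simp only [Matrix.det_fin_two_of, Matrix.smul_of, Matrix.of_add_of, Matrix.smul_cons,
    Matrix.smul_empty, Matrix.cons_add_cons, Matrix.empty_add_empty, smul_eq_mul, mul_zero,
    add_zero]
  field_simp
  linear_combination (-((a ^ 2 + b ^ 2) * t ^ 2 * a ^ 2)) * hε

/-- With `t₂ = −|σ₂|²t₁`, `t₃ = rσ₂'t₁`, and `1/t₁ = rσ₂'' ± √((r²+1)|σ₂|²)`, both
`det(D_{t₃}(σ₂) + T) = 0` and `det(D_{t₃}(σ₂) − T) = 0`. -/
theorem stmt_8 (σ₂ : ℂ) (hσ : 0 < σ₂.re) (r t₁ t₂ t₃ : ℝ) (ht₁ : t₁ ≠ 0)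
    (ht₂ : t₂ = -(‖σ₂‖ ^ 2) * t₁) (ht₃ : t₃ = r * σ₂.re * t₁)
    (hroot : 1 / t₁ = r * σ₂.im + Real.sqrt ((r ^ 2 + 1) * ‖σ₂‖ ^ 2) ∨
             1 / t₁ = r * σ₂.im - Real.sqrt ((r ^ 2 + 1) * ‖σ₂‖ ^ 2)) :
    let D : Matrix (Fin 2) (Fin 2) ℝ :=
      !![1 / σ₂.re, σ₂.im / σ₂.re + t₃; σ₂.im / σ₂.re + t₃, ‖σ₂‖ ^ 2 / σ₂.re]
    let T : Matrix (Fin 2) (Fin 2) ℝ := !![t₁, 0; 0, t₂]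
    (D + T).det = 0 ∧ (D - T).det = 0 := by
  intro D T
  subst ht₂ ht₃
  have hn : ‖σ₂‖ ^ 2 = σ₂.re ^ 2 + σ₂.im ^ 2 := by
    rw [Complex.sq_norm, Complex.normSq_apply]; ring
  have hdisc : (r ^ 2 + 1) * ‖σ₂‖ ^ 2 = (r * σ₂.im) ^ 2 + ((r * σ₂.re) ^ 2 + ‖σ₂‖ ^ 2) := by
    rw [hn]; ring
  rw [hdisc] at hroot
  have hquad := sq_sub_two_mul_sub_eq_zero_of_eq_add_or_sub_sqrt (by positivity) hroot
  field_simp at hquad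
  have hdet (ε : ℝ) (hε : ε ^ 2 = 1) : (D + ε • T).det = 0 := by
    rw [det_fin_two_add_smul_diagonal hσ.ne' hn hε]
    field_simp
    linear_combination hquad
  refine ⟨?_, ?_⟩
  · simpa using hdet 1 (one_pow 2)
  · simpa [sub_eq_add_neg] using hdet (-1) (by norm_num)
end

section
/- Let A be a 2×2 real symmetric matrix, M a 2×2 real symmetric positive semi-definite matrix, and b, m real numbers with m² = det M. If the 4×4 block matrix [[A, bR⊥],[−bR⊥, A]] − F·[[M, mR⊥],[−mR⊥, M]] is positive semi-definite for a real number F ≥ 0, then tr A ≥ F·tr M and det(A − F·M) ≥ (b − F·m)², where R⊥ = [[0,1],[−1,0]]. -/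
/-!
The real matrix `[[X, -Y], [Y, X]]` is the realification of the complex matrix `X + iY`: the
quadratic form of `X + iY` at `u + iv` is that of `[[X, -Y], [Y, X]]` at `(u, v)`. The hypothesis
says this real matrix is positive semidefinite for `X = A - FM`, `Y = -(b - Fm)R⊥`, so the complex
`2 × 2` matrix `X + iY` is positive semidefinite and has nonnegative trace and determinant. Their
real parts are `tr (A - FM)` and `det (A - FM) - (b - Fm)²`.
-/

open Matrix ComplexOrder

namespace Matrix

variable {n : Type*}

def complexOfReIm (X Y : Matrix n n ℝ) : Matrix n n ℂ :=
  of fun i j ↦ ⟨X i j, Y i j⟩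

lemma re_star_dotProduct_complexOfReIm_mulVec [Fintype n] (X Y : Matrix n n ℝ) (u v : n → ℝ) :
    (star (fun i ↦ (⟨u i, v i⟩ : ℂ)) ⬝ᵥ complexOfReIm X Y *ᵥ fun i ↦ ⟨u i, v i⟩).re =
      Sum.elim u v ⬝ᵥ fromBlocks X (-Y) Y X *ᵥ Sum.elim u v := by
  rw [dotProduct_block, fromBlocks_mulVec]
  simp [dotProduct, mulVec, complexOfReIm, Complex.re_sum, Finset.mul_sum, mul_add, mul_sub,
    Finset.sum_add_distrib, Finset.sum_sub_distrib]
  ring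

lemma isHermitian_complexOfReIm {X Y : Matrix n n ℝ} (h : (fromBlocks X (-Y) Y X).IsHermitian) :
    (complexOfReIm X Y).IsHermitian := by
  rw [isHermitian_fromBlocks_iff] at h
  obtain ⟨hX, hY, -, -⟩ := h
  ext i j
  apply Complex.ext
  · simpa [complexOfReIm] using congrFun₂ hX i j
  · simpa [complexOfReIm] using congrFun₂ hY i j

lemma PosSemidef.complexOfReIm [Fintype n] {X Y : Matrix n n ℝ}
    (h : (fromBlocks X (-Y) Y X).PosSemidef) : (complexOfReIm X Y).PosSemidef := by
  have hH := isHermitian_complexOfReIm h.isHermitian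
  refine .of_dotProduct_mulVec_nonneg hH fun x ↦ Complex.nonneg_iff.mpr ⟨?_, ?_⟩
  · have hquad := re_star_dotProduct_complexOfReIm_mulVec X Y (fun i ↦ (x i).re) (fun i ↦ (x i).im)
    simp only [Complex.eta] at hquad
    exact hquad ▸ h.dotProduct_mulVec_nonneg _
  · exact (hH.im_star_dotProduct_mulVec_self x).symm

lemma trace_nonneg_and_sq_le_det_of_posSemidef_fromBlocks (N : Matrix (Fin 2) (Fin 2) ℝ) (c : ℝ)
    (h : (fromBlocks N (c • !![0, 1; -1, 0]) (-(c • !![0, 1; -1, 0])) N).PosSemidef) :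
    0 ≤ N.trace ∧ c ^ 2 ≤ N.det := by
  have hH := PosSemidef.complexOfReIm (X := N) (Y := -(c • !![0, 1; -1, 0])) (by rwa [neg_neg])
  have htrace : (complexOfReIm N (-(c • !![0, 1; -1, 0]))).trace.re = N.trace := by
    simp [trace_fin_two, complexOfReIm]
  have hdet : (complexOfReIm N (-(c • !![0, 1; -1, 0]))).det.re = N.det - c ^ 2 := by
    simp [det_fin_two, complexOfReIm]
    ring
  constructor
  · rw [← htrace]
    exact (Complex.nonneg_iff.mp hH.trace_nonneg).1
  · rw [← sub_nonneg, ← hdet]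
    exact (Complex.nonneg_iff.mp hH.det_nonneg).1

end Matrix

theorem stmt_13_general (A M : Matrix (Fin 2) (Fin 2) ℝ) (b m F : ℝ)
    (hpsd : (fromBlocks A (b • !![0, 1; -1, 0]) (-(b • !![0, 1; -1, 0])) A
            - F • fromBlocks M (m • !![0, 1; -1, 0]) (-(m • !![0, 1; -1, 0])) M).PosSemidef) :
    F * M.trace ≤ A.trace ∧ (b - F * m) ^ 2 ≤ (A - F • M).det := by
  have hblocks : fromBlocks A (b • !![0, 1; -1, 0]) (-(b • !![0, 1; -1, 0])) A
      - F • fromBlocks M (m • !![0, 1; -1, 0]) (-(m • !![0, 1; -1, 0])) M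
      = fromBlocks (A - F • M) ((b - F * m) • !![0, 1; -1, 0]) (-((b - F * m) • !![0, 1; -1, 0]))
          (A - F • M) := by
    rw [fromBlocks_smul, sub_eq_add_neg, fromBlocks_neg, fromBlocks_add]
    congr 1 <;> module
  obtain ⟨htrace, hdet⟩ :=
    trace_nonneg_and_sq_le_det_of_posSemidef_fromBlocks _ _ (hblocks ▸ hpsd)
  rw [trace_sub, trace_smul, smul_eq_mul, sub_nonneg] at htrace
  exact ⟨htrace, hdet⟩

/-- If `[[A, bR⊥],[−bR⊥, A]] − F·[[M, mR⊥],[−mR⊥, M]] ⪰ 0` with `F ≥ 0`, `m² = det M`,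
then `tr A ≥ F tr M` and `det(A − FM) ≥ (b − Fm)²`. -/
theorem stmt_13 (A M : Matrix (Fin 2) (Fin 2) ℝ) (b m F : ℝ)
    (hA : A.IsSymm) (hM : M.IsSymm) (hMpsd : M.PosSemidef) (hm : m ^ 2 = M.det)
    (hF : 0 ≤ F)
    (hpsd : (fromBlocks A (b • !![0, 1; -1, 0]) (-(b • !![0, 1; -1, 0])) A
            - F • fromBlocks M (m • !![0, 1; -1, 0]) (-(m • !![0, 1; -1, 0])) M).PosSemidef) :
    F * M.trace ≤ A.trace ∧ (b - F * m) ^ 2 ≤ (A - F • M).det :=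
  stmt_13_general A M b m F hpsd
end
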